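/- arXiv:1505.06865 — 5 statements merged into one kernel-verified Lean document; each statement's English description precedes it below -/
import Mathlib

section
/- Let V be a type and v, v' ∈ V with v ≠ v'. Let n, f be natural numbers with 0 < f, 2f ≤ n and n ≤ 3f. Then there exist a single reply pattern ρ : Fin n → Option V and two partitions (C₁, B₁, U₁) and (C₂, B₂, U₂) of Fin n into pairwise disjoint finite sets covering Fin n, with |B₁| = |B₂| = f and |U₁| = |U₂| = f, such that ρ i = some v for every i ∈ C₁, ρ i = some v' for every i ∈ C₂, and ρ i = none for every i ∈ U₁ ∪ U₂. (Indistinguishability core of Theorem 1: when n ≤ 3f the same set of authenticated replies is consistent both with the register value being v and with it being v', so no algorithm implements a MWMR atomic register in Garay's model.) -/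
/-- Indistinguishability core of Theorem 1 (Garay's model): for `0 < f`,
`2f ≤ n ≤ 3f` and distinct values `v ≠ v'`, there is a single reply pattern
`ρ : Fin n → Option V` (where `none` means silence) together with two
partitions `(C₁, B₁, U₁)` and `(C₂, B₂, U₂)` of the servers into correct,
faulty and cured sets, with `|B₁| = |B₂| = f` and `|U₁| = |U₂| = f`, such that
all correct servers of the first partition reply `v`, all correct servers of
the second partition reply `v'`, and all cured servers are silent. -/
theorem garay_indistinguishability {V : Type*} (v v' : V) (hvv : v ≠ v')
    (n f : ℕ) (hf : 0 < f) (h2f : 2 * f ≤ n) (h3f : n ≤ 3 * f) :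
    ∃ (ρ : Fin n → Option V) (C₁ B₁ U₁ C₂ B₂ U₂ : Finset (Fin n)),
      Disjoint C₁ B₁ ∧ Disjoint C₁ U₁ ∧ Disjoint B₁ U₁ ∧
      C₁ ∪ B₁ ∪ U₁ = Finset.univ ∧
      Disjoint C₂ B₂ ∧ Disjoint C₂ U₂ ∧ Disjoint B₂ U₂ ∧
      C₂ ∪ B₂ ∪ U₂ = Finset.univ ∧
      B₁.card = f ∧ B₂.card = f ∧ U₁.card = f ∧ U₂.card = f ∧
      (∀ i ∈ C₁, ρ i = some v) ∧
      (∀ i ∈ C₂, ρ i = some v') ∧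
      (∀ i ∈ U₁ ∪ U₂, ρ i = none) := by
  set k := n - 2 * f with hk
  have hkf : k ≤ f := by omega
  have h2kf : 2 * k + f ≤ n := by omega
  refine ⟨fun i => if i.val < k then some v else if i.val < 2 * k then some v'
      else if i.val < 2 * k + f then none else some v,
    Finset.univ.filter (fun i => i.val < k),
    Finset.univ.filter (fun i => (k ≤ i.val ∧ i.val < 2 * k) ∨ 2 * k + f ≤ i.val),
    Finset.univ.filter (fun i => 2 * k ≤ i.val ∧ i.val < 2 * k + f),
    Finset.univ.filter (fun i => k ≤ i.val ∧ i.val < 2 * k),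
    Finset.univ.filter (fun i => i.val < k ∨ 2 * k + f ≤ i.val),
    Finset.univ.filter (fun i => 2 * k ≤ i.val ∧ i.val < 2 * k + f),
    ?_, ?_, ?_, ?_, ?_, ?_, ?_, ?_, ?_, ?_, ?_, ?_, ?_, ?_, ?_⟩
  · rw [Finset.disjoint_left]; intro i hi hi'
    simp only [Finset.mem_filter] at hi hi'; omega
  · rw [Finset.disjoint_left]; intro i hi hi'
    simp only [Finset.mem_filter] at hi hi'; omega
  · rw [Finset.disjoint_left]; intro i hi hi'
    simp only [Finset.mem_filter] at hi hi'; omega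
  · ext i; simp only [Finset.mem_union, Finset.mem_filter, Finset.mem_univ, true_and,
      iff_true]
    omega
  · rw [Finset.disjoint_left]; intro i hi hi'
    simp only [Finset.mem_filter] at hi hi'; omega
  · rw [Finset.disjoint_left]; intro i hi hi'
    simp only [Finset.mem_filter] at hi hi'; omega
  · rw [Finset.disjoint_left]; intro i hi hi'
    simp only [Finset.mem_filter] at hi hi'; omega
  · ext i; simp only [Finset.mem_union, Finset.mem_filter, Finset.mem_univ, true_and,
      iff_true]
    omega
  · have : (Finset.univ.filter (fun i : Fin n => (k ≤ i.val ∧ i.val < 2 * k) ∨ 2 * k + f ≤ i.val))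
        = (Finset.Ico k (2 * k) ∪ Finset.Ico (2 * k + f) n).attachFin
          (by intro m hm; simp only [Finset.mem_union, Finset.mem_Ico] at hm; omega) := by
      ext i
      simp [Finset.mem_attachFin, i.isLt]
    have hd : Disjoint (Finset.Ico k (2 * k)) (Finset.Ico (2 * k + f) n) := by
      rw [Finset.disjoint_left]; intro m hm hm'
      simp only [Finset.mem_Ico] at hm hm'; omega
    rw [this, Finset.card_attachFin, Finset.card_union_of_disjoint hd, Nat.card_Ico,
      Nat.card_Ico]
    omega
  · have : (Finset.univ.filter (fun i : Fin n => i.val < k ∨ 2 * k + f ≤ i.val))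
        = (Finset.Ico 0 k ∪ Finset.Ico (2 * k + f) n).attachFin
          (by intro m hm; simp only [Finset.mem_union, Finset.mem_Ico] at hm; omega) := by
      ext i
      simp [Finset.mem_attachFin, i.isLt]
    have hd : Disjoint (Finset.Ico 0 k) (Finset.Ico (2 * k + f) n) := by
      rw [Finset.disjoint_left]; intro m hm hm'
      simp only [Finset.mem_Ico] at hm hm'; omega
    rw [this, Finset.card_attachFin, Finset.card_union_of_disjoint hd, Nat.card_Ico,
      Nat.card_Ico]
    omega
  · have : (Finset.univ.filter (fun i : Fin n => 2 * k ≤ i.val ∧ i.val < 2 * k + f))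
        = (Finset.Ico (2 * k) (2 * k + f)).attachFin
          (by intro m hm; simp only [Finset.mem_Ico] at hm; omega) := by
      ext i
      simp [Finset.mem_attachFin]
    rw [this, Finset.card_attachFin, Nat.card_Ico]; omega
  · have : (Finset.univ.filter (fun i : Fin n => 2 * k ≤ i.val ∧ i.val < 2 * k + f))
        = (Finset.Ico (2 * k) (2 * k + f)).attachFin
          (by intro m hm; simp only [Finset.mem_Ico] at hm; omega) := by
      ext i
      simp [Finset.mem_attachFin]
    rw [this, Finset.card_attachFin, Nat.card_Ico]; omega
  · intro i hi
    simp only [Finset.mem_filter, Finset.mem_univ, true_and] at hi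
    simp [hi]
  · intro i hi
    simp only [Finset.mem_filter, Finset.mem_univ, true_and] at hi
    have h1 : ¬ i.val < k := by omega
    simp [h1, hi.2]
  · intro i hi
    simp only [Finset.mem_union, Finset.mem_filter, Finset.mem_univ, true_and, or_self] at hi
    have h1 : ¬ i.val < k := by omega
    have h2 : ¬ i.val < 2 * k := by omega
    simp [h1, h2, hi.2]
end

section
/- Let V be a type and v, v' ∈ V with v ≠ v'. Let n, f be natural numbers with 0 < f, 2f ≤ n and n ≤ 4f. Then there exist a single reply pattern ρ : Fin n → V and two partitions (C₁, B₁, U₁) and (C₂, B₂, U₂) of Fin n into pairwise disjoint finite sets covering Fin n, with |B₁| = |B₂| = f and |U₁| = |U₂| = f, such that ρ i = v for every i ∈ C₁ and ρ i = v' for every i ∈ C₂. (Indistinguishability core of Theorem 2: when n ≤ 4f a reader can receive 2f copies of v and 2f copies of v' and cannot tell which value comes from correct servers, so no algorithm implements a MWMR atomic register in Sasaki's model.) -/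
lemma card_filter_val_lt (n c : ℕ) (hc : c ≤ n) :
    (Finset.univ.filter fun i : Fin n => (i : ℕ) < c).card = c := by
  have : (Finset.univ.filter fun i : Fin n => (i : ℕ) < c)
      = Finset.map (Fin.castLEEmb hc) Finset.univ := by
    ext i
    simp only [Finset.mem_filter, Finset.mem_univ, true_and, Finset.mem_map]
    constructor
    · intro h; exact ⟨⟨i, h⟩, by simp [Fin.castLEEmb, Fin.ext_iff]⟩
    · rintro ⟨a, rfl⟩; simp [Fin.castLEEmb]
  simp [this]

lemma split_compl {n f : ℕ} (C : Finset (Fin n)) (h : Cᶜ.card = 2 * f) :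
    ∃ B U : Finset (Fin n), Disjoint C B ∧ Disjoint C U ∧ Disjoint B U ∧
      C ∪ B ∪ U = Finset.univ ∧ B.card = f ∧ U.card = f := by
  obtain ⟨B, hBsub, hBcard⟩ := Finset.exists_subset_card_eq (s := Cᶜ) (n := f) (by omega)
  refine ⟨B, Cᶜ \ B, ?_, ?_, ?_, ?_, hBcard, ?_⟩
  · exact (disjoint_compl_right).mono_right hBsub
  · exact (disjoint_compl_right).mono_right Finset.sdiff_subset
  · exact disjoint_sdiff_self_right
  · rw [Finset.union_assoc, Finset.union_sdiff_of_subset hBsub, Finset.union_compl]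
  · rw [Finset.card_sdiff_of_subset hBsub, h, hBcard]; omega

/-- Indistinguishability core of Theorem 2 (Sasaki's model): for `0 < f`,
`2f ≤ n ≤ 4f` and distinct values `v ≠ v'`, there is a single reply pattern
`ρ : Fin n → V` together with two partitions `(C₁, B₁, U₁)` and
`(C₂, B₂, U₂)` of the servers into correct, faulty and cured sets, with
`|B₁| = |B₂| = f` and `|U₁| = |U₂| = f`, such that all correct servers of the
first partition reply `v` and all correct servers of the second partition
reply `v'`. -/
theorem sasaki_indistinguishability {V : Type*} (v v' : V) (hvv : v ≠ v')
    (n f : ℕ) (hf : 0 < f) (h2f : 2 * f ≤ n) (h4f : n ≤ 4 * f) :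
    ∃ (ρ : Fin n → V) (C₁ B₁ U₁ C₂ B₂ U₂ : Finset (Fin n)),
      Disjoint C₁ B₁ ∧ Disjoint C₁ U₁ ∧ Disjoint B₁ U₁ ∧
      C₁ ∪ B₁ ∪ U₁ = Finset.univ ∧
      Disjoint C₂ B₂ ∧ Disjoint C₂ U₂ ∧ Disjoint B₂ U₂ ∧
      C₂ ∪ B₂ ∪ U₂ = Finset.univ ∧
      B₁.card = f ∧ B₂.card = f ∧ U₁.card = f ∧ U₂.card = f ∧
      (∀ i ∈ C₁, ρ i = v) ∧
      (∀ i ∈ C₂, ρ i = v') := by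
  set c := n - 2 * f with hc
  have hcn : c ≤ n := by omega
  have h2cn : 2 * c ≤ n := by omega
  set C₁ : Finset (Fin n) := Finset.univ.filter fun i => (i : ℕ) < c with hC1
  set C₂ : Finset (Fin n) := Finset.univ.filter fun i => c ≤ (i : ℕ) ∧ (i : ℕ) < 2 * c with hC2
  have hC1card : C₁.card = c := card_filter_val_lt n c hcn
  have hC2card : C₂.card = c := by
    have heq : C₂ = (Finset.univ.filter fun i : Fin n => (i : ℕ) < 2 * c) \ C₁ := by
      ext i
      simp only [hC1, hC2, Finset.mem_filter, Finset.mem_sdiff, Finset.mem_univ, true_and]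
      omega
    rw [heq, Finset.card_sdiff_of_subset, card_filter_val_lt n _ h2cn, hC1card]
    · omega
    · intro i hi
      simp only [hC1, hC2, Finset.mem_filter, Finset.mem_univ, true_and] at hi ⊢
      omega
  have hC1c : C₁ᶜ.card = 2 * f := by
    rw [Finset.card_compl, hC1card, Fintype.card_fin]; omega
  have hC2c : C₂ᶜ.card = 2 * f := by
    rw [Finset.card_compl, hC2card, Fintype.card_fin]; omega
  obtain ⟨B₁, U₁, d1, d2, d3, u1, b1, u1c⟩ := split_compl C₁ hC1c
  obtain ⟨B₂, U₂, e1, e2, e3, u2, b2, u2c⟩ := split_compl C₂ hC2c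
  refine ⟨fun i => if (i : ℕ) < c then v else v', C₁, B₁, U₁, C₂, B₂, U₂,
    d1, d2, d3, u1, e1, e2, e3, u2, b1, b2, u1c, u2c, ?_, ?_⟩
  · intro i hi
    simp only [hC1, Finset.mem_filter] at hi
    simp [hi.2]
  · intro i hi
    simp only [hC2, Finset.mem_filter] at hi
    simp [hi.2.1, Nat.not_lt.mpr hi.2.1]
end

section
/- Let V be a type and v, v' ∈ V with v ≠ v'. Let n, f be natural numbers with 0 < f, 2f ≤ n and n ≤ 4f. Then there exist a single reply pattern ρ : Fin n → V and two partitions (C₁, B₁, U₁) and (C₂, B₂, U₂) of Fin n into pairwise disjoint finite sets covering Fin n, with |B₁| = |B₂| = f and |U₁| = |U₂| = f, such that ρ i = v for every i ∈ C₁ and ρ i = v' for every i ∈ C₂. (Indistinguishability core of Theorem 3: when n ≤ 4f the same replies are consistent with either v or v' being the register value, so no algorithm implements a MWMR atomic register in Bonnet's model.) -/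
lemma card_filter_val (n : ℕ) (p : ℕ → Prop) [DecidablePred p] :
    (Finset.univ.filter (fun i : Fin n => p i.val)).card
      = ((Finset.range n).filter p).card := by
  rw [← Finset.card_map Fin.valEmbedding]
  congr 1
  ext x
  simp only [Finset.mem_map, Finset.mem_filter, Finset.mem_univ, true_and,
    Fin.valEmbedding_apply, Finset.mem_range]
  constructor
  · rintro ⟨i, hp, rfl⟩; exact ⟨i.isLt, hp⟩
  · rintro ⟨hx, hp⟩; exact ⟨⟨x, hx⟩, hp, rfl⟩

lemma card_filter_val_Ico (n a b : ℕ) (hb : b ≤ n) :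
    (Finset.univ.filter (fun i : Fin n => a ≤ i.val ∧ i.val < b)).card = b - a := by
  rw [card_filter_val n (fun m => a ≤ m ∧ m < b)]
  have : (Finset.range n).filter (fun m => a ≤ m ∧ m < b) = Finset.Ico a b := by
    ext x; simp [Finset.mem_Ico]; omega
  rw [this, Nat.card_Ico]

/-- Indistinguishability core of Theorem 3 (Bonnet's model): for `0 < f`,
`2f ≤ n ≤ 4f` and distinct values `v ≠ v'`, there is a single reply pattern
`ρ : Fin n → V` together with two partitions `(C₁, B₁, U₁)` and
`(C₂, B₂, U₂)` of the servers into correct, faulty and cured sets, with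
`|B₁| = |B₂| = f` and `|U₁| = |U₂| = f`, such that all correct servers of the
first partition reply `v` and all correct servers of the second partition
reply `v'`. -/
theorem bonnet_indistinguishability {V : Type*} (v v' : V) (hvv : v ≠ v')
    (n f : ℕ) (hf : 0 < f) (h2f : 2 * f ≤ n) (h4f : n ≤ 4 * f) :
    ∃ (ρ : Fin n → V) (C₁ B₁ U₁ C₂ B₂ U₂ : Finset (Fin n)),
      Disjoint C₁ B₁ ∧ Disjoint C₁ U₁ ∧ Disjoint B₁ U₁ ∧
      C₁ ∪ B₁ ∪ U₁ = Finset.univ ∧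
      Disjoint C₂ B₂ ∧ Disjoint C₂ U₂ ∧ Disjoint B₂ U₂ ∧
      C₂ ∪ B₂ ∪ U₂ = Finset.univ ∧
      B₁.card = f ∧ B₂.card = f ∧ U₁.card = f ∧ U₂.card = f ∧
      (∀ i ∈ C₁, ρ i = v) ∧
      (∀ i ∈ C₂, ρ i = v') := by
  set k := n - 2 * f with hk
  refine ⟨fun i => if i.val < k then v else v',
    Finset.univ.filter (fun i => i.val < k),
    Finset.univ.filter (fun i => k ≤ i.val ∧ i.val < k + f),
    Finset.univ.filter (fun i => k + f ≤ i.val ∧ i.val < n),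
    Finset.univ.filter (fun i => 2 * f ≤ i.val),
    Finset.univ.filter (fun i => 0 ≤ i.val ∧ i.val < f),
    Finset.univ.filter (fun i => f ≤ i.val ∧ i.val < 2 * f),
    ?_, ?_, ?_, ?_, ?_, ?_, ?_, ?_, ?_, ?_, ?_, ?_, ?_, ?_⟩
  · rw [Finset.disjoint_filter]; intro i _ h; omega
  · rw [Finset.disjoint_filter]; intro i _ h; omega
  · rw [Finset.disjoint_filter]; intro i _ h; omega
  · ext i; have := i.isLt; simp; omega
  · rw [Finset.disjoint_filter]; intro i _ h; omega
  · rw [Finset.disjoint_filter]; intro i _ h; omega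
  · rw [Finset.disjoint_filter]; intro i _ h; omega
  · ext i; have := i.isLt; simp; omega
  · rw [card_filter_val_Ico n k (k + f) (by omega)]; omega
  · rw [card_filter_val_Ico n 0 f (by omega)]; omega
  · rw [card_filter_val_Ico n (k + f) n (by omega)]; omega
  · rw [card_filter_val_Ico n f (2 * f) (by omega)]; omega
  · intro i hi; simp only [Finset.mem_filter] at hi; simp [hi.2]
  · intro i hi
    simp only [Finset.mem_filter] at hi
    have : ¬ i.val < k := by omega
    simp [this]
end

section
/- Let V be a type, v ∈ V, and let n, f be natural numbers with n > 3f. Let C, B, U be pairwise disjoint finite subsets of Fin n whose union is Fin n, with |B| ≤ f and |U| ≤ f, and let ρ : Fin n → Option V satisfy ρ i = some v for all i ∈ C and ρ i = none for all i ∈ U. Then the number of indices i with ρ i = some v is at least n − 2f, and for every w ≠ v the number of indices i with ρ i = some w is at most f, which is strictly less than n − 2f. Consequently v is the unique value occurring at least n − 2f times in ρ. (Quorum-correctness core of Lemma 1 and the Validity theorem for Garay's model with parameters α = 3, β = 2.) -/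
/-- Quorum-correctness core of Lemma 1 and Validity for Garay's model
(`α = 3`, `β = 2`): with `n > 3f`, if `C`, `B`, `U` partition the servers with
`|B| ≤ f` (faulty) and `|U| ≤ f` (cured, silent), every correct server replies
`some v` and every cured server replies `none`, then `v` occurs at least
`n - 2f` times, any other value occurs at most `f < n - 2f` times, and `v` is
the unique value occurring at least `n - 2f` times. -/
theorem garay_quorum_correctness {V : Type*} [DecidableEq V] (v : V)
    (n f : ℕ) (hn : n > 3 * f)
    (C B U : Finset (Fin n))
    (hCB : Disjoint C B) (hCU : Disjoint C U) (hBU : Disjoint B U)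
    (hcover : C ∪ B ∪ U = Finset.univ)
    (hB : B.card ≤ f) (hU : U.card ≤ f)
    (ρ : Fin n → Option V)
    (hρC : ∀ i ∈ C, ρ i = some v)
    (hρU : ∀ i ∈ U, ρ i = none) :
    n - 2 * f ≤ (Finset.univ.filter (fun i => ρ i = some v)).card ∧
    (∀ w : V, w ≠ v →
      (Finset.univ.filter (fun i => ρ i = some w)).card ≤ f ∧
      f < n - 2 * f) ∧
    (∀ u : V, n - 2 * f ≤ (Finset.univ.filter (fun i => ρ i = some u)).card →
      u = v) := by
  have hcard : C.card + B.card + U.card = n := by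
    have h1 : (C ∪ B ∪ U).card = C.card + B.card + U.card := by
      rw [Finset.card_union_of_disjoint, Finset.card_union_of_disjoint hCB]
      · exact Finset.disjoint_union_left.mpr ⟨hCU, hBU⟩
    rw [hcover] at h1
    simpa [Finset.card_univ] using h1.symm
  have hC : n - 2 * f ≤ C.card := by omega
  have h1 : n - 2 * f ≤ (Finset.univ.filter (fun i => ρ i = some v)).card := by
    refine hC.trans (Finset.card_le_card ?_)
    intro i hi
    simp [hρC i hi]
  have hflt : f < n - 2 * f := by omega
  have h2 : ∀ w : V, w ≠ v →
      (Finset.univ.filter (fun i => ρ i = some w)).card ≤ f := by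
    intro w hw
    refine le_trans (Finset.card_le_card ?_) hB
    intro i hi
    simp only [Finset.mem_filter, Finset.mem_univ, true_and] at hi
    have : i ∈ C ∪ B ∪ U := by rw [hcover]; exact Finset.mem_univ i
    simp only [Finset.mem_union] at this
    rcases this with (hiC | hiB) | hiU
    · exact absurd ((hρC i hiC).symm.trans hi) (by simp [hw.symm])
    · exact hiB
    · simp [hρU i hiU] at hi
  refine ⟨h1, fun w hw => ⟨h2 w hw, hflt⟩, fun u hu => ?_⟩
  by_contra hne
  have := h2 u hne
  omega
end

section
/- Let V be a type, v ∈ V, and let n, f be natural numbers with n > 4f. Let C be a finite subset of Fin n with |C| ≥ n − 2f, and let ρ : Fin n → V satisfy ρ i = v for all i ∈ C. Then the number of indices i with ρ i = v is at least n − 2f, and for every w ≠ v the number of indices i with ρ i = w is at most 2f, which is strictly less than n − 2f. Consequently v is the unique value occurring at least n − 2f times in ρ. (Quorum-correctness core of Lemma 1 and the Validity theorem for the Sasaki and Bonnet models with parameters α = 4, β = 2.) -/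
/-- Quorum-correctness core of Lemma 1 and Validity for the Sasaki and Bonnet
models (`α = 4`, `β = 2`): with `n > 4f`, if the correct servers `C` satisfy
`|C| ≥ n - 2f` and each replies `v`, then `v` occurs at least `n - 2f` times,
any other value occurs at most `2f < n - 2f` times, and `v` is the unique
value occurring at least `n - 2f` times. -/
theorem sasaki_bonnet_quorum_correctness {V : Type*} [DecidableEq V] (v : V)
    (n f : ℕ) (hn : n > 4 * f)
    (C : Finset (Fin n)) (hC : n - 2 * f ≤ C.card)
    (ρ : Fin n → V)
    (hρC : ∀ i ∈ C, ρ i = v) :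
    n - 2 * f ≤ (Finset.univ.filter (fun i => ρ i = v)).card ∧
    (∀ w : V, w ≠ v →
      (Finset.univ.filter (fun i => ρ i = w)).card ≤ 2 * f ∧
      2 * f < n - 2 * f) ∧
    (∀ u : V, n - 2 * f ≤ (Finset.univ.filter (fun i => ρ i = u)).card →
      u = v) := by
  have hv : n - 2 * f ≤ (Finset.univ.filter (fun i => ρ i = v)).card := by
    refine le_trans hC (Finset.card_le_card ?_)
    intro i hi
    simp [hρC i hi]
  have hw : ∀ w : V, w ≠ v →
      (Finset.univ.filter (fun i => ρ i = w)).card ≤ 2 * f := by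
    intro w hwv
    have hsub : (Finset.univ.filter (fun i => ρ i = w)) ⊆ Finset.univ \ C := by
      intro i hi
      simp only [Finset.mem_filter] at hi
      simp only [Finset.mem_sdiff, Finset.mem_univ, true_and]
      intro hiC
      exact hwv (by rw [← hi.2, hρC i hiC])
    calc (Finset.univ.filter (fun i => ρ i = w)).card
        ≤ (Finset.univ \ C).card := Finset.card_le_card hsub
      _ = n - C.card := by simp [Finset.card_sdiff_of_subset (Finset.subset_univ C)]
      _ ≤ 2 * f := by omega
  have hlt : 2 * f < n - 2 * f := by omega
  refine ⟨hv, fun w hwv => ⟨hw w hwv, hlt⟩, fun u hu => ?_⟩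
  by_contra huv
  exact absurd hu (by have := hw u huv; omega)
end
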